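/- Let {u(n,m)} be an i.i.d. real zero-mean random field with finite variance σ². Then E[ sup_{ω,υ} | (1/(NM)) ∑_{n=0}^{N-1} ∑_{m=0}^{M-1} u(n,m) e^{j(ωn + υm)} |² ] ≤ K (NM)^{-1/2} for some finite constant K independent of N, M. -/

import Mathlib

/-!
Expanding `|∑_p v(p) e^{i⟨w,p⟩}|²` over pairs `(p, q)` and grouping by the lag `τ = p - q` bounds
the squared Fourier sum, uniformly in the frequency `w`, by `∑_τ |C(τ)|`, where `C` is the sample
autocorrelation of `v` on the grid. Now `E|C(0)| = NMσ²`, while for `τ ≠ 0` the lag products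
`u(q+τ)u(q)` are pairwise orthogonal with second moment `σ⁴`, so
`E|C(τ)| ≤ √(E C(τ)²) ≤ √(NM) σ²`. There are at most `4NM` lags, hence
`E sup ≤ (NM)⁻² (NMσ² + 4NM √(NM) σ²) ≤ 5σ² / √(NM)`.
-/

open MeasureTheory ProbabilityTheory Finset
open scoped Pointwise

section Autocorrelation

variable {A : Type*} [AddCommGroup A] [DecidableEq A]

def autocorr (G : Finset A) (v : A → ℝ) (τ : A) : ℝ :=
  ∑ q ∈ G with q + τ ∈ G, v (q + τ) * v q

lemma autocorr_zero (G : Finset A) (v : A → ℝ) : autocorr G v 0 = ∑ q ∈ G, v q ^ 2 := by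
  simp [autocorr, sq]

lemma sum_sum_sub_eq_sum_sub {β : Type*} [AddCommMonoid β] (G : Finset A) (F : A → A → β) :
    ∑ p ∈ G, ∑ q ∈ G, F (p - q) q = ∑ τ ∈ G - G, ∑ q ∈ G with q + τ ∈ G, F τ q := by
  have inner (q : A) (hq : q ∈ G) :
      ∑ p ∈ G, F (p - q) q = ∑ τ ∈ G - G with q + τ ∈ G, F τ q := by
    refine sum_nbij' (· - q) (q + ·) (fun p hp => ?_) (fun τ hτ => ?_) (fun p _ => ?_)
      (fun τ _ => ?_) (fun _ _ => rfl)
    · simpa [mem_sub, hp] using ⟨p, hp, q, hq, rfl⟩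
    · simpa using (mem_filter.mp hτ).2
    · simp
    · simp
  rw [sum_comm, sum_congr rfl inner]
  exact sum_comm' fun q τ => by simp only [mem_filter]; tauto

lemma sum_mul_exp_mul_conj_eq (G : Finset A) (v : A → ℝ) (φ : A →+ ℝ) :
    (∑ p ∈ G, (v p : ℂ) * Complex.exp (Complex.I * φ p)) *
        starRingEnd ℂ (∑ p ∈ G, (v p : ℂ) * Complex.exp (Complex.I * φ p)) =
      ∑ τ ∈ G - G, (autocorr G v τ : ℂ) * Complex.exp (Complex.I * φ τ) := by
  have term (p q : A) :
      (v p : ℂ) * Complex.exp (Complex.I * φ p) *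
          starRingEnd ℂ ((v q : ℂ) * Complex.exp (Complex.I * φ q)) =
        (v (q + (p - q)) * v q : ℝ) * Complex.exp (Complex.I * φ (p - q)) := by
    rw [add_sub_cancel, map_sub, map_mul, ← Complex.exp_conj, mul_mul_mul_comm,
      ← Complex.exp_add]
    simp only [map_mul, Complex.conj_ofReal, Complex.conj_I]
    push_cast
    ring_nf
  simp_rw [map_sum, sum_mul_sum, term, sum_sum_sub_eq_sum_sub G
    (fun τ q => ((v (q + τ) * v q : ℝ) : ℂ) * Complex.exp (Complex.I * φ τ)), ← sum_mul,
    autocorr]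
  push_cast
  rfl

lemma norm_sum_mul_exp_sq_le (G : Finset A) (v : A → ℝ) (φ : A →+ ℝ) :
    ‖∑ p ∈ G, (v p : ℂ) * Complex.exp (Complex.I * φ p)‖ ^ 2 ≤
      ∑ τ ∈ G - G, |autocorr G v τ| := by
  rw [sq]
  nth_rw 2 [← Complex.norm_conj]
  rw [← norm_mul, sum_mul_exp_mul_conj_eq]
  refine (norm_sum_le _ _).trans (le_of_eq (sum_congr rfl fun τ _ => ?_))
  rw [norm_mul, Complex.norm_exp_I_mul_ofReal, mul_one, Complex.norm_real, Real.norm_eq_abs]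

end Autocorrelation

section Moments

variable {Ω : Type*} [MeasurableSpace Ω] {μ : Measure Ω}

lemma sq_integral_abs_le_integral_sq [IsProbabilityMeasure μ] {f : Ω → ℝ} (hf : MemLp f 2 μ) :
    (∫ x, |f x| ∂μ) ^ 2 ≤ ∫ x, f x ^ 2 ∂μ := by
  have h := variance_eq_sub hf.abs ▸ variance_nonneg |f| μ
  simp only [Pi.pow_apply, Pi.abs_apply, sq_abs] at h
  linarith

lemma integral_sq_sum_of_orthogonal {κ : Type*} (s : Finset κ) {X : κ → Ω → ℝ}
    (hX : ∀ i ∈ s, MemLp (X i) 2 μ)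
    (horth : ∀ i ∈ s, ∀ j ∈ s, i ≠ j → ∫ x, X i x * X j x ∂μ = 0) :
    ∫ x, (∑ i ∈ s, X i x) ^ 2 ∂μ = ∑ i ∈ s, ∫ x, X i x ^ 2 ∂μ := by
  have hint (i) (hi : i ∈ s) (j) (hj : j ∈ s) : Integrable (fun x => X i x * X j x) μ :=
    (hX i hi).integrable_mul (hX j hj)
  simp_rw [sq, sum_mul_sum]
  rw [integral_finsetSum _ fun i hi => integrable_finsetSum _ fun j hj => hint i hi j hj]
  refine sum_congr rfl fun i hi => ?_
  rw [integral_finsetSum _ fun j hj => hint i hi j hj]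
  exact sum_eq_single i (fun j hj hji => horth i hi j hj hji.symm) (absurd hi)

variable {ι : Type*} {u : ι → Ω → ℝ}

lemma integral_mul_mul_mul_eq_zero (hindep : iIndepFun u μ) (hmeas : ∀ i, Measurable (u i))
    {a b c d : ι} (hmean : ∫ x, u a x ∂μ = 0) (hb : a ≠ b) (hc : a ≠ c) (hd : a ≠ d) :
    ∫ x, u a x * (u b x * u c x * u d x) ∂μ = 0 := by
  classical
  have hind := (hindep.indepFun_finset {a} {b, c, d} (by simp [hb, hc, hd]) hmeas).comp
    (φ := fun y : ({a} : Finset ι) → ℝ => y ⟨a, mem_singleton_self a⟩)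
    (ψ := fun y : ({b, c, d} : Finset ι) → ℝ => y ⟨b, by simp⟩ * y ⟨c, by simp⟩ * y ⟨d, by simp⟩)
    (_mγ := inferInstance) (_mγ' := inferInstance) (by fun_prop) (by fun_prop)
  simpa [Function.comp_def, hmean] using
    hind.integral_fun_mul_eq_mul_integral (by fun_prop) (by fun_prop)

lemma indepFun_sq_sq (hindep : iIndepFun u μ) {a b : ι} (hab : a ≠ b) :
    IndepFun (fun x => u a x ^ 2) (fun x => u b x ^ 2) μ :=
  (hindep.indepFun hab).comp (measurable_id.pow_const 2) (measurable_id.pow_const 2)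

lemma memLp_two_mul_of_ne (hindep : iIndepFun u μ) (hmeas : ∀ i, Measurable (u i))
    (hL2 : ∀ i, MemLp (u i) 2 μ) {a b : ι} (hab : a ≠ b) :
    MemLp (fun x => u a x * u b x) 2 μ := by
  rw [memLp_two_iff_integrable_sq (by fun_prop)]
  simp_rw [mul_pow]
  exact (indepFun_sq_sq hindep hab).integrable_mul (hL2 a).integrable_sq (hL2 b).integrable_sq

lemma integral_mul_sq_of_ne (hindep : iIndepFun u μ) (hmeas : ∀ i, Measurable (u i))
    {σ2 : ℝ} (hvar : ∀ i, ∫ x, u i x ^ 2 ∂μ = σ2) {a b : ι} (hab : a ≠ b) :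
    ∫ x, (u a x * u b x) ^ 2 ∂μ = σ2 ^ 2 := by
  simp_rw [mul_pow]
  rw [(indepFun_sq_sq hindep hab).integral_fun_mul_eq_mul_integral (by fun_prop) (by fun_prop),
    hvar, hvar, sq]

end Moments

section RandomAutocorrelation

variable {Ω : Type*} [MeasurableSpace Ω] {μ : Measure Ω}
  {A : Type*} [AddCommGroup A] [DecidableEq A] {u : A → Ω → ℝ}

lemma integrable_autocorr (hL2 : ∀ i, MemLp (u i) 2 μ) (G : Finset A) (τ : A) :
    Integrable (fun x => autocorr G (u · x) τ) μ :=
  integrable_finsetSum _ fun q _ => (hL2 (q + τ)).integrable_mul (hL2 q)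

lemma integral_abs_autocorr_zero (hL2 : ∀ i, MemLp (u i) 2 μ) {σ2 : ℝ}
    (hvar : ∀ i, ∫ x, u i x ^ 2 ∂μ = σ2) (G : Finset A) :
    ∫ x, |autocorr G (u · x) 0| ∂μ = #G * σ2 := by
  simp_rw [autocorr_zero, abs_of_nonneg (sum_nonneg fun q _ => sq_nonneg (u q _))]
  rw [integral_finsetSum _ fun q _ => (hL2 q).integrable_sq]
  simp [hvar]

variable [IsAddTorsionFree A]

lemma integral_lagProduct_mul_eq_zero (hindep : iIndepFun u μ) (hmeas : ∀ i, Measurable (u i))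
    (hmean : ∀ i, ∫ x, u i x ∂μ = 0) {τ q q' : A} (hτ : τ ≠ 0) (hq : q ≠ q') :
    ∫ x, (u (q + τ) x * u q x) * (u (q' + τ) x * u q' x) ∂μ = 0 := by
  -- Some index occurs exactly once: `q + τ`, or else `q' + τ = q + 2τ` (torsion-freeness).
  by_cases hlag : q + τ = q'
  · rw [← integral_mul_mul_mul_eq_zero hindep hmeas (hmean (q' + τ)) (b := q + τ) (c := q)
      (d := q') (by grind) (by grind) (by grind)]
    congr 1; ext x; ring
  · rw [← integral_mul_mul_mul_eq_zero hindep hmeas (hmean (q + τ)) (b := q) (c := q' + τ)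
      (d := q') (by grind) (by grind) hlag]
    congr 1; ext x; ring

lemma integral_abs_autocorr_le [IsProbabilityMeasure μ] (hindep : iIndepFun u μ)
    (hmeas : ∀ i, Measurable (u i)) (hL2 : ∀ i, MemLp (u i) 2 μ)
    (hmean : ∀ i, ∫ x, u i x ∂μ = 0) {σ2 : ℝ}
    (hvar : ∀ i, ∫ x, u i x ^ 2 ∂μ = σ2) (hσ : 0 ≤ σ2) (G : Finset A) {τ : A} (hτ : τ ≠ 0) :
    ∫ x, |autocorr G (u · x) τ| ∂μ ≤ √(#G : ℝ) * σ2 := by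
  have hlag (q : A) : q + τ ≠ q := by simpa using hτ
  have hL2lag (q : A) := memLp_two_mul_of_ne hindep hmeas hL2 (hlag q)
  have hsq : ∫ x, autocorr G (u · x) τ ^ 2 ∂μ = #{q ∈ G | q + τ ∈ G} * σ2 ^ 2 := by
    unfold autocorr
    rw [integral_sq_sum_of_orthogonal _ (fun q _ => hL2lag q)
      (fun q _ q' _ hq => integral_lagProduct_mul_eq_zero hindep hmeas hmean hτ hq)]
    simp [integral_mul_sq_of_ne hindep hmeas hvar (hlag _)]
  rw [← Real.sqrt_sq hσ, ← Real.sqrt_mul (Nat.cast_nonneg _)]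
  have hC : MemLp (fun x => autocorr G (u · x) τ) 2 μ := memLp_finsetSum _ fun q _ => hL2lag q
  refine Real.le_sqrt_of_sq_le ((sq_integral_abs_le_integral_sq hC).trans ?_)
  rw [hsq]
  gcongr
  exact filter_subset _ G

lemma integral_sum_abs_autocorr_le [IsProbabilityMeasure μ] (hindep : iIndepFun u μ)
    (hmeas : ∀ i, Measurable (u i)) (hL2 : ∀ i, MemLp (u i) 2 μ)
    (hmean : ∀ i, ∫ x, u i x ∂μ = 0) {σ2 : ℝ}
    (hvar : ∀ i, ∫ x, u i x ^ 2 ∂μ = σ2) (hσ : 0 ≤ σ2) {G : Finset A} (hG : G.Nonempty) :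
    ∫ x, ∑ τ ∈ G - G, |autocorr G (u · x) τ| ∂μ ≤ #G * σ2 + #(G - G) * (√(#G : ℝ) * σ2) := by
  have h0 : (0 : A) ∈ G - G := by
    obtain ⟨p, hp⟩ := hG
    exact mem_sub.mpr ⟨p, hp, p, hp, sub_self p⟩
  rw [integral_finsetSum _ fun τ _ => (integrable_autocorr hL2 G τ).abs, ← add_sum_erase _ _ h0,
    integral_abs_autocorr_zero hL2 hvar]
  gcongr
  calc ∑ τ ∈ (G - G).erase 0, ∫ x, |autocorr G (u · x) τ| ∂μ
      ≤ #((G - G).erase 0) • (√(#G : ℝ) * σ2) := sum_le_card_nsmul _ _ _ fun τ hτ =>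
        integral_abs_autocorr_le hindep hmeas hL2 hmean hvar hσ G (ne_of_mem_erase hτ)
    _ ≤ #(G - G) * (√(#G : ℝ) * σ2) := by
        rw [nsmul_eq_mul]
        gcongr
        exact erase_subset 0 _

end RandomAutocorrelation

def grid (N M : ℕ) : Finset (ℤ × ℤ) :=
  (range N ×ˢ range M).map (Nat.castEmbedding.prodMap Nat.castEmbedding)

lemma card_grid (N M : ℕ) : #(grid N M) = N * M := by
  simp [grid]

lemma card_grid_sub_grid_le (N M : ℕ) : #(grid N M - grid N M) ≤ 4 * (N * M) := by
  have hsub : grid N M - grid N M ⊆ Ioo (-(N : ℤ)) N ×ˢ Ioo (-(M : ℤ)) M := by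
    intro τ hτ
    obtain ⟨p, hp, q, hq, rfl⟩ := mem_sub.mp hτ
    simp only [grid, mem_map, mem_product, mem_range] at hp hq
    obtain ⟨⟨n, m⟩, ⟨hn, hm⟩, rfl⟩ := hp
    obtain ⟨⟨n', m'⟩, ⟨hn', hm'⟩, rfl⟩ := hq
    simp [Function.Embedding.prodMap]
    omega
  calc #(grid N M - grid N M) ≤ #(Ioo (-(N : ℤ)) N) * #(Ioo (-(M : ℤ)) M) :=
        (card_le_card hsub).trans_eq (card_product _ _)
    _ ≤ (2 * N) * (2 * M) := by
        simp only [Int.card_Ioo]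
        gcongr <;> omega
    _ = 4 * (N * M) := by ring

def phase (w : ℝ × ℝ) : ℤ × ℤ →+ ℝ :=
  AddMonoidHom.mk' (fun p => w.1 * p.1 + w.2 * p.2) fun p q => by
    simp only [Prod.fst_add, Prod.snd_add]
    push_cast
    ring

lemma sum_range_range_eq_sum_grid (N M : ℕ) (v : ℤ × ℤ → ℝ) (w : ℝ × ℝ) :
    ∑ n ∈ range N, ∑ m ∈ range M,
        (v ((n : ℤ), (m : ℤ)) : ℂ) * Complex.exp (Complex.I * (w.1 * n + w.2 * m)) =
      ∑ p ∈ grid N M, (v p : ℂ) * Complex.exp (Complex.I * phase w p) := by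
  rw [grid, sum_map, ← sum_product']
  simp [phase, Function.Embedding.prodMap, Prod.map, Nat.castEmbedding_apply]

lemma inv_sq_mul_le_div_sqrt {R σ2 : ℝ} (hR : 1 ≤ R) (hσ : 0 ≤ σ2) :
    R⁻¹ ^ 2 * (R * σ2 + 4 * R * (√R * σ2)) ≤ 5 * σ2 / √R := by
  obtain ⟨s, hs, rfl⟩ : ∃ s, 1 ≤ s ∧ R = s ^ 2 :=
    ⟨√R, Real.one_le_sqrt.mpr hR, (Real.sq_sqrt (zero_le_one.trans hR)).symm⟩
  rw [Real.sqrt_sq (zero_le_one.trans hs), le_div_iff₀ (by positivity)]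
  field_simp
  nlinarith [mul_nonneg hσ (sub_nonneg.mpr hs)]

theorem stmt9_general {Ω : Type*} [MeasurableSpace Ω] (μ : Measure Ω) [IsProbabilityMeasure μ]
    (u : ℤ × ℤ → Ω → ℝ) (σ2 : ℝ)
    (hmeas : ∀ p, Measurable (u p))
    (hindep : iIndepFun u μ)
    (hL2 : ∀ p, MemLp (u p) 2 μ)
    (hmean : ∀ p, ∫ x, u p x ∂μ = 0)
    (hvar : ∀ p, ∫ x, (u p x) ^ 2 ∂μ = σ2) :
    ∃ K : ℝ, ∀ N M : ℕ, 0 < N → 0 < M →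
      (∫ x,
          (⨆ w : ℝ × ℝ,
            ‖(1 / ((N : ℂ) * (M : ℂ))) *
                ∑ n ∈ Finset.range N, ∑ m ∈ Finset.range M,
                  (u ((n : ℤ), (m : ℤ)) x : ℂ) *
                    Complex.exp (Complex.I * (w.1 * n + w.2 * m))‖ ^ 2) ∂μ) ≤
        K / Real.sqrt ((N : ℝ) * M) := by
  have hσ : 0 ≤ σ2 := hvar 0 ▸ integral_nonneg fun x => sq_nonneg _
  refine ⟨5 * σ2, fun N M hN hM => ?_⟩
  set G := grid N M
  have hR : (1 : ℝ) ≤ N * M := by exact_mod_cast Nat.mul_pos hN hM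
  have hG : G.Nonempty := card_pos.mp (by rw [card_grid]; positivity)
  have hpoint (x : Ω) (w : ℝ × ℝ) :
      ‖(1 / ((N : ℂ) * (M : ℂ))) * ∑ n ∈ range N, ∑ m ∈ range M,
          (u ((n : ℤ), (m : ℤ)) x : ℂ) * Complex.exp (Complex.I * (w.1 * n + w.2 * m))‖ ^ 2 ≤
        ((N * M : ℝ)⁻¹) ^ 2 * ∑ τ ∈ G - G, |autocorr G (u · x) τ| := by
    rw [norm_mul, mul_pow, sum_range_range_eq_sum_grid N M (u · x) w]
    gcongr
    · simp
    · exact norm_sum_mul_exp_sq_le G _ (phase w)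
  calc _ ≤ ∫ x, ((N * M : ℝ)⁻¹) ^ 2 * ∑ τ ∈ G - G, |autocorr G (u · x) τ| ∂μ :=
        integral_mono_of_nonneg (ae_of_all _ fun x => Real.iSup_nonneg fun w => sq_nonneg _)
          ((integrable_finsetSum _ fun τ _ => (integrable_autocorr hL2 G τ).abs).const_mul _)
          (ae_of_all _ fun x => Real.iSup_le (hpoint x) (by positivity))
    _ = ((N * M : ℝ)⁻¹) ^ 2 * ∫ x, ∑ τ ∈ G - G, |autocorr G (u · x) τ| ∂μ :=
        integral_const_mul _ _
    _ ≤ ((N * M : ℝ)⁻¹) ^ 2 * (N * M * σ2 + 4 * (N * M) * (√(N * M) * σ2)) := by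
        gcongr
        refine (integral_sum_abs_autocorr_le hindep hmeas hL2 hmean hvar hσ hG).trans ?_
        rw [card_grid]
        push_cast
        gcongr
        exact_mod_cast card_grid_sub_grid_le N M
    _ ≤ 5 * σ2 / √(N * M) := inv_sq_mul_le_div_sqrt hR hσ

/-- For an i.i.d. real zero-mean field with finite variance, the expected squared
supremum of the normalized 2-D Fourier sum is `O((NM)^{-1/2})`. -/
theorem stmt9 {Ω : Type*} [MeasurableSpace Ω] (μ : Measure Ω) [IsProbabilityMeasure μ]
    (u : ℤ × ℤ → Ω → ℝ) (σ2 : ℝ)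
    (hmeas : ∀ p, Measurable (u p))
    (hindep : iIndepFun u μ)
    (hident : ∀ p q, Measure.map (u p) μ = Measure.map (u q) μ)
    (hL2 : ∀ p, MemLp (u p) 2 μ)
    (hmean : ∀ p, ∫ x, u p x ∂μ = 0)
    (hvar : ∀ p, ∫ x, (u p x) ^ 2 ∂μ = σ2) :
    ∃ K : ℝ, ∀ N M : ℕ, 0 < N → 0 < M →
      (∫ x,
          (⨆ w : ℝ × ℝ,
            ‖(1 / ((N : ℂ) * (M : ℂ))) *
                ∑ n ∈ Finset.range N, ∑ m ∈ Finset.range M,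
                  (u ((n : ℤ), (m : ℤ)) x : ℂ) *
                    Complex.exp (Complex.I * (w.1 * n + w.2 * m))‖ ^ 2) ∂μ) ≤
        K / Real.sqrt ((N : ℝ) * M) :=
  stmt9_general μ u σ2 hmeas hindep hL2 hmean hvar
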